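/- Let U : ℝ^d → ℝ have gradient ξ = ∇U twice continuously differentiable, fix r > 0, and let ζ(t) = (x(t), w(t)) be a differentiable solution on [0,T] of the ODE x'(t) = 2w(t), w'(t) = −2P(x(t))x(t) + 𝐛(x(t),w(t)), such that ξ(x(t)) ≠ 0 for all t ∈ [0,T] and ξ̄(x(0))ᵀw(0) = 0. Then the potential is conserved along the limit process: U(x(t)) = U(x(0)) for all t ∈ [0,T]. -/

import Mathlib

open MeasureTheory
open scoped RealInnerProductSpace

/-- The normalized vector field `ξ̄(x) = ξ(x)/|ξ(x)|` (junk value `0` on `𝒩 = {ξ = 0}`). -/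
noncomputable def xibar (d : ℕ) (ξ : EuclideanSpace ℝ (Fin d) → EuclideanSpace ℝ (Fin d))
    (x : EuclideanSpace ℝ (Fin d)) : EuclideanSpace ℝ (Fin d) :=
  ‖ξ x‖⁻¹ • ξ x

/-- The tangential projection `P(x)v = v − (ξ̄(x)ᵀv)ξ̄(x)`. -/
noncomputable def tangP (d : ℕ) (ξ : EuclideanSpace ℝ (Fin d) → EuclideanSpace ℝ (Fin d))
    (x v : EuclideanSpace ℝ (Fin d)) : EuclideanSpace ℝ (Fin d) :=
  v - ⟪xibar d ξ x, v⟫ • xibar d ξ x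

/-- The drift `𝐛(x,w) = −2(r²−|w|²−|x|²)·Dξ̄(x)ξ̄(x) − 2(wᵀDξ̄(x)w)·ξ̄(x)` of
the limit ODE. -/
noncomputable def limb (d : ℕ) (ξ : EuclideanSpace ℝ (Fin d) → EuclideanSpace ℝ (Fin d))
    (r : ℝ) (x w : EuclideanSpace ℝ (Fin d)) : EuclideanSpace ℝ (Fin d) :=
  (-2 * (r ^ 2 - ‖w‖ ^ 2 - ‖x‖ ^ 2)) • fderiv ℝ (xibar d ξ) x (xibar d ξ x)
    + (-2 * ⟪w, fderiv ℝ (xibar d ξ) x w⟫) • xibar d ξ x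

/-!
Since `|ξ̄| = 1` off `𝒩`, every `Dξ̄(x)v` is orthogonal to `ξ̄(x)`. Along the flow,
`⟪ξ̄(x), w⟫' = ⟪Dξ̄(x) 2w, w⟫ + ⟪ξ̄(x), −2P(x)x + 𝐛(x,w)⟫`: the `P`-term is tangential, the
`Dξ̄(x)ξ̄(x)`-term of `𝐛` is orthogonal to `ξ̄(x)`, and the `ξ̄`-component `−2⟪w, Dξ̄(x)w⟫` of `𝐛`
cancels `⟪Dξ̄(x) 2w, w⟫`. So `⟪ξ̄(x), w⟫` stays `0`, and `(U ∘ x)' = ⟪ξ(x), 2w⟫ = 0`.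
-/

theorem eq_of_hasDerivWithinAt_Icc_zero {E : Type*} [NormedAddCommGroup E] [NormedSpace ℝ E]
    {f : ℝ → E} {a b : ℝ} (hf : ∀ t ∈ Set.Icc a b, HasDerivWithinAt f 0 (Set.Icc a b) t) :
    ∀ t ∈ Set.Icc a b, f t = f a :=
  constant_of_has_deriv_right_zero (fun t ht => (hf t ht).continuousWithinAt)
    fun t ht => (hf t (Set.Ico_subset_Icc_self ht)).mono_of_mem_nhdsWithin
      (Icc_mem_nhdsGE_of_mem ht)

theorem inner_fderiv_eq_zero_of_eventually_norm_eq {E F : Type*} [NormedAddCommGroup E]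
    [NormedSpace ℝ E] [NormedAddCommGroup F] [InnerProductSpace ℝ F] {f : E → F} {x₀ : E}
    {c : ℝ} (hf : DifferentiableAt ℝ f x₀) (hc : ∀ᶠ y in nhds x₀, ‖f y‖ = c) (v : E) :
    ⟪f x₀, fderiv ℝ f x₀ v⟫ = 0 := by
  have hconst : HasFDerivAt (‖f ·‖ ^ 2) (0 : E →L[ℝ] ℝ) x₀ :=
    (hasFDerivAt_const (c ^ 2) x₀).congr_of_eventuallyEq
      (hc.mono fun _ hy => congrArg (· ^ 2) hy)
  simpa using congrArg (· v) (hf.hasFDerivAt.norm_sq.unique hconst)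

section Normalized

variable {d : ℕ} {ξ : EuclideanSpace ℝ (Fin d) → EuclideanSpace ℝ (Fin d)}
  {x₀ : EuclideanSpace ℝ (Fin d)}

theorem norm_xibar (h : ξ x₀ ≠ 0) : ‖xibar d ξ x₀‖ = 1 :=
  norm_smul_inv_norm h

theorem inner_xibar_eq (v : EuclideanSpace ℝ (Fin d)) :
    ⟪xibar d ξ x₀, v⟫ = ‖ξ x₀‖⁻¹ * ⟪ξ x₀, v⟫ :=
  real_inner_smul_left _ _ _

theorem differentiableAt_xibar (hξ : Differentiable ℝ ξ) (h : ξ x₀ ≠ 0) :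
    DifferentiableAt ℝ (xibar d ξ) x₀ :=
  ((hξ x₀).norm ℝ h).inv (norm_ne_zero_iff.2 h) |>.smul (hξ x₀)

theorem inner_xibar_fderiv_xibar (hξ : Differentiable ℝ ξ) (h : ξ x₀ ≠ 0)
    (v : EuclideanSpace ℝ (Fin d)) :
    ⟪xibar d ξ x₀, fderiv ℝ (xibar d ξ) x₀ v⟫ = 0 := by
  have hopen : IsOpen {y | ξ y ≠ 0} := isOpen_compl_singleton.preimage hξ.continuous
  exact inner_fderiv_eq_zero_of_eventually_norm_eq (differentiableAt_xibar hξ h)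
    (Filter.eventually_of_mem (hopen.mem_nhds h) fun _ hy => norm_xibar hy) v

theorem inner_xibar_limitField_add_inner_fderiv (hξ : Differentiable ℝ ξ) (h : ξ x₀ ≠ 0)
    (r : ℝ) (w₀ : EuclideanSpace ℝ (Fin d)) :
    ⟪xibar d ξ x₀, (-2 : ℝ) • tangP d ξ x₀ x₀ + limb d ξ r x₀ w₀⟫
      + ⟪fderiv ℝ (xibar d ξ) x₀ ((2 : ℝ) • w₀), w₀⟫ = 0 := by
  have hunit : ⟪xibar d ξ x₀, xibar d ξ x₀⟫ = 1 := by
    rw [real_inner_self_eq_norm_sq, norm_xibar h, one_pow]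
  have horth := inner_xibar_fderiv_xibar hξ h
  simp only [tangP, limb, map_smul, inner_add_right, inner_sub_right,
    inner_smul_right, hunit, horth, real_inner_comm w₀]
  ring

end Normalized

theorem stmt_16_general (d : ℕ) (U : EuclideanSpace ℝ (Fin d) → ℝ)
    (ξ : EuclideanSpace ℝ (Fin d) → EuclideanSpace ℝ (Fin d))
    (hgrad : ∀ y, HasGradientAt U (ξ y) y) (hξ_C2 : ContDiff ℝ 2 ξ)
    (r T : ℝ)
    (x w : ℝ → EuclideanSpace ℝ (Fin d))
    (hx' : ∀ t ∈ Set.Icc (0 : ℝ) T,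
      HasDerivWithinAt x ((2 : ℝ) • w t) (Set.Icc (0 : ℝ) T) t)
    (hw' : ∀ t ∈ Set.Icc (0 : ℝ) T,
      HasDerivWithinAt w ((-2 : ℝ) • tangP d ξ (x t) (x t) + limb d ξ r (x t) (w t))
        (Set.Icc (0 : ℝ) T) t)
    (hne : ∀ t ∈ Set.Icc (0 : ℝ) T, ξ (x t) ≠ 0)
    (h0 : ⟪xibar d ξ (x 0), w 0⟫ = 0) :
    ∀ t ∈ Set.Icc (0 : ℝ) T, U (x t) = U (x 0) := by
  have hξ : Differentiable ℝ ξ := hξ_C2.differentiable (by norm_num)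
  have hnormal : ∀ t ∈ Set.Icc (0 : ℝ) T,
      HasDerivWithinAt (fun s => ⟪xibar d ξ (x s), w s⟫) 0 (Set.Icc 0 T) t := fun t ht => by
    have := ((differentiableAt_xibar hξ (hne t ht)).hasFDerivAt.comp_hasDerivWithinAt t
      (hx' t ht)).inner ℝ (hw' t ht)
    rwa [Function.comp_apply, inner_xibar_limitField_add_inner_fderiv hξ (hne t ht)] at this
  have htangent : ∀ t ∈ Set.Icc (0 : ℝ) T, ⟪ξ (x t), w t⟫ = 0 := fun t ht => by
    have := (eq_of_hasDerivWithinAt_Icc_zero hnormal t ht).trans h0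
    rw [inner_xibar_eq] at this
    exact (mul_eq_zero.1 this).resolve_left (inv_ne_zero (norm_ne_zero_iff.2 (hne t ht)))
  refine eq_of_hasDerivWithinAt_Icc_zero fun t ht => ?_
  have := (hgrad (x t)).hasFDerivAt.comp_hasDerivWithinAt t (hx' t ht)
  rwa [InnerProductSpace.toDual_apply_apply, inner_smul_right, htangent t ht, mul_zero] at this

/-- Along any solution of the limit ODE `x' = 2w`, `w' = −2P(x)x + 𝐛(x,w)` staying
away from `𝒩 = {ξ = 0}` and starting tangentially (`ξ̄(x(0))ᵀw(0) = 0`), the potential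
is conserved: `U(x(t)) = U(x(0))`. -/
theorem stmt_16 (d : ℕ) (U : EuclideanSpace ℝ (Fin d) → ℝ)
    (ξ : EuclideanSpace ℝ (Fin d) → EuclideanSpace ℝ (Fin d))
    (hgrad : ∀ y, HasGradientAt U (ξ y) y) (hξ_C2 : ContDiff ℝ 2 ξ)
    (r T : ℝ) (hr : 0 < r) (hT : 0 ≤ T)
    (x w : ℝ → EuclideanSpace ℝ (Fin d))
    (hx' : ∀ t ∈ Set.Icc (0 : ℝ) T,
      HasDerivWithinAt x ((2 : ℝ) • w t) (Set.Icc (0 : ℝ) T) t)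
    (hw' : ∀ t ∈ Set.Icc (0 : ℝ) T,
      HasDerivWithinAt w ((-2 : ℝ) • tangP d ξ (x t) (x t) + limb d ξ r (x t) (w t))
        (Set.Icc (0 : ℝ) T) t)
    (hne : ∀ t ∈ Set.Icc (0 : ℝ) T, ξ (x t) ≠ 0)
    (h0 : ⟪xibar d ξ (x 0), w 0⟫ = 0) :
    ∀ t ∈ Set.Icc (0 : ℝ) T, U (x t) = U (x 0) :=
  stmt_16_general d U ξ hgrad hξ_C2 r T x w hx' hw' hne h0
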